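/- With notation as in the context, assume A is unital and that p_w = ∑_{e ∈ s⁻¹(w)} s_e s_e* for every vertex w with x_w ≠ 0 (the relative Cuntz–Krieger relation on the support of x). Then U := V + (1 − P) is a unitary element of M_h(A), i.e. U*U = UU* = 1. -/

import Mathlib

/-- The range map extended to `E¹ ⊕ E⁰` via the convention `r v = v` for vertices. -/
def rext {V E : Type*} (r : E → V) : E ⊕ V → V := Sum.elim r id

/-- The index set `S↑(x)`. -/
def SUp {V E : Type*} (s : E → V) (x : V → ℤ) : Set ((E ⊕ V) × ℤ) :=
  {q | match q.1 with
       | Sum.inl e => 1 ≤ q.2 ∧ q.2 ≤ -x (s e)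
       | Sum.inr v => 1 ≤ q.2 ∧ q.2 ≤ x v}

/-- The index set `S↓(x)`. -/
def SDn {V E : Type*} (s : E → V) (x : V → ℤ) : Set ((E ⊕ V) × ℤ) :=
  {q | match q.1 with
       | Sum.inl e => 1 ≤ q.2 ∧ q.2 ≤ x (s e)
       | Sum.inr v => 1 ≤ q.2 ∧ q.2 ≤ -x v}

/-- The element `V` of `M_h(A)` associated to a family `{p_v, s_e}` and `x`:
`V = ∑_{w, 1≤i≤x_w, s(e)=w} s_e·E_{m↑(w,i),m↓(e,i)} + ∑_{w, 1≤i≤-x_w, s(e)=w} s_e*·E_{m↑(e,i),m↓(w,i)}`,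
where the first sum is indexed by the pairs `(e,i) ∈ S↓(x)` with `e ∈ E¹` (and `w = s(e)`),
and the second by the pairs `(e,i) ∈ S↑(x)` with `e ∈ E¹` (and `w = s(e)`). -/
noncomputable def Vmat {V E A : Type*} [AddCommMonoid A] [Star A]
    (s : E → V) (x : V → ℤ) (S : E → A) {h : ℕ}
    [Fintype (SUp s x)] [Fintype (SDn s x)]
    (mup : SUp s x ≃ Fin h) (mdn : SDn s x ≃ Fin h) : Matrix (Fin h) (Fin h) A :=
  (∑ q : SDn s x, match q with
    | ⟨(Sum.inl e, i), hq⟩ =>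
        Matrix.single (mup ⟨(Sum.inr (s e), i), hq⟩) (mdn ⟨(Sum.inl e, i), hq⟩) (S e)
    | ⟨(Sum.inr _, _), _⟩ => 0)
  + (∑ q : SUp s x, match q with
    | ⟨(Sum.inl e, i), hq⟩ =>
        Matrix.single (mup ⟨(Sum.inl e, i), hq⟩) (mdn ⟨(Sum.inr (s e), i), hq⟩) (star (S e))
    | ⟨(Sum.inr _, _), _⟩ => 0)

/-- The element `P` of `M_h(A)`:
`P = ∑_{w, 1≤i≤x_w} p_w·E_{m↑(w,i),m↑(w,i)} + ∑_{w, 1≤i≤-x_w, s(e)=w} p_{r(e)}·E_{m↑(e,i),m↑(e,i)}`,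
written as a single sum over `S↑(x)` using the convention `r v = v`. -/
noncomputable def Pmat {V E A : Type*} [AddCommMonoid A]
    (r s : E → V) (x : V → ℤ) (p : V → A) {h : ℕ}
    [Fintype (SUp s x)]
    (mup : SUp s x ≃ Fin h) : Matrix (Fin h) (Fin h) A :=
  ∑ q : SUp s x, Matrix.single (mup q) (mup q) (p (rext r q.1.1))

/-!
`V` is a partial isometry whose initial and final projections are both `P`. Indexing rows by
`S↑(x)` and columns by `S↓(x)`, the product `V V*` is diagonal because the `s_e` have mutually
orthogonal ranges; its diagonal entry is `s_e* s_e = p_{r(e)}` at an edge row `(e, i)`, and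
`∑_{s(e) = w} s_e s_e* = p_w` at a vertex row `(w, i)` by the relative Cuntz–Krieger relation.
The entries of `V` are symmetric under exchanging rows and columns together with `*`, so `V* V`
is the same computation with `S↑(x)` and `S↓(x)` exchanged, and the compatibility of `m↑` and
`m↓` identifies the result with `P` again. Together with `P V = V = V P`, this makes
`V + (1 - P)` unitary.
-/

open scoped Matrix

theorem CStarRing.mul_star_mul_self_of_isIdempotentElem {R : Type*} [NonUnitalNormedRing R]
    [StarRing R] [CStarRing R] {a : R} (h : IsIdempotentElem (star a * a)) :
    a * (star a * a) = a := by
  have hzero : star (a * (star a * a) - a) * (a * (star a * a) - a) = 0 := calc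
    _ = (star a * a) * (star a * a) * (star a * a) - (star a * a) * (star a * a)
          - (star a * a) * (star a * a) + star a * a := by
        simp only [star_sub, star_mul, star_star]; noncomm_ring
    _ = 0 := by simp only [h.eq]; abel
  exact sub_eq_zero.mp ((CStarRing.star_mul_self_eq_zero_iff _).mp hzero)

theorem add_one_sub_mem_unitary {R : Type*} [Ring R] [StarRing R] {v q : R}
    (hvv : v * star v = q) (hvv' : star v * v = q) (hqv : q * v = v) (hvq : v * q = v) :
    v + (1 - q) ∈ unitary R := by
  have hq : star q = q := by rw [← hvv, star_mul, star_star]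
  have hqq : q * q = q := calc
    q * q = q * v * star v := by rw [mul_assoc, hvv]
    _ = q := by rw [hqv, hvv]
  have hvq' : star v * q = star v := by simpa [hq] using congrArg star hqv
  have hqv' : q * star v = star v := by simpa [hq] using congrArg star hvq
  rw [Unitary.mem_iff]
  constructor <;>
    simp only [star_add, star_sub, star_one, hq, mul_add, add_mul, mul_sub, sub_mul, mul_one,
      one_mul, hvv, hvv', hqq, hqv, hvq, hqv', hvq'] <;> abel

open Classical in
/-- The entries of `V` read through `m↑` and `m↓` (see `Vmat_apply`). -/
noncomputable def vEntry {V E A : Type*} [Zero A] [Star A] (s : E → V) (S : E → A) :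
    (E ⊕ V) × ℤ → (E ⊕ V) × ℤ → A
  | (.inr w, i), (.inl e, j) => if s e = w ∧ i = j then S e else 0
  | (.inl e, i), (.inr w, j) => if s e = w ∧ i = j then star (S e) else 0
  | (.inl _, _), (.inl _, _) => 0
  | (.inr _, _), (.inr _, _) => 0

section Entries

variable {V E A : Type*} (r s : E → V) (p : V → A) (S : E → A)

theorem star_vEntry [AddMonoid A] [StarAddMonoid A] (a b : (E ⊕ V) × ℤ) :
    star (vEntry s S a b) = vEntry s S b a := by
  obtain ⟨a | a, i⟩ := a <;> obtain ⟨b | b, j⟩ := b <;>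
    simp only [vEntry, apply_ite star, star_zero, star_star] <;> grind

theorem Vmat_apply {h : ℕ} [AddCommMonoid A] [Star A] (x : V → ℤ)
    [Fintype (SUp s x)] [Fintype (SDn s x)]
    (mup : SUp s x ≃ Fin h) (mdn : SDn s x ≃ Fin h) (a : SUp s x) (b : SDn s x) :
    Vmat s x S mup mdn (mup a) (mdn b) = vEntry s S a.1 b.1 := by
  classical
  rw [Vmat, Matrix.add_apply, Matrix.sum_apply, Matrix.sum_apply,
    Finset.sum_eq_single b, Finset.sum_eq_single a]
  · obtain ⟨⟨a | a, i⟩, ha⟩ := a <;> obtain ⟨⟨b | b, j⟩, hb⟩ := b <;>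
      simp [vEntry, Matrix.single_apply, Subtype.ext_iff, @eq_comm ℤ j i]
  · rintro ⟨⟨e | v, i⟩, hq⟩ _ hne
    · simp only [Matrix.single_apply, EmbeddingLike.apply_eq_iff_eq, ite_eq_right_iff, and_imp]
      grind
    · simp
  · simp
  · rintro ⟨⟨e | v, i⟩, hq⟩ _ hne
    · simp only [Matrix.single_apply, EmbeddingLike.apply_eq_iff_eq, ite_eq_right_iff, and_imp]
      grind
    · simp
  · simp

theorem proj_mul_vEntry [NonUnitalNonAssocSemiring A] [Star A]
    (hsrc : ∀ e, p (s e) * S e = S e) (hrng : ∀ e, p (r e) * star (S e) = star (S e))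
    (a b : (E ⊕ V) × ℤ) : p (rext r a.1) * vEntry s S a b = vEntry s S a b := by
  obtain ⟨a | a, i⟩ := a <;> obtain ⟨b | b, j⟩ := b <;> simp only [vEntry, rext, Sum.elim_inl,
    Sum.elim_inr, id, mul_ite, mul_zero] <;> split_ifs with hb <;> grind

theorem vEntry_mul_proj [NonUnitalSemiring A] [StarRing A] (hp : ∀ v, star (p v) = p v)
    (hsrc : ∀ e, p (s e) * S e = S e) (hrng : ∀ e, p (r e) * star (S e) = star (S e))
    (a b : (E ⊕ V) × ℤ) : vEntry s S a b * p (rext r b.1) = vEntry s S a b := by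
  rw [← star_vEntry, ← hp, ← star_mul, proj_mul_vEntry r s p S hsrc hrng]

theorem sum_vEntry_mul_vEntry_inr [NonUnitalNonAssocSemiring A] [StarRing A]
    (Sb : Set ((E ⊕ V) × ℤ)) [Fintype Sb] (w : V) (i : ℤ)
    (hedge : ∀ e, s e = w → (Sum.inl e, i) ∈ Sb) :
    ∑ b : Sb, vEntry s S (Sum.inr w, i) b.1 * vEntry s S b.1 (Sum.inr w, i)
      = ∑ᶠ e ∈ {e | s e = w}, S e * star (S e) := by
  rw [← finsum_eq_sum_of_fintype, finsum_set_coe_eq_finsum_mem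
    (f := fun b => vEntry s S (Sum.inr w, i) b * vEntry s S b (Sum.inr w, i)) Sb,
    finsum_mem_inter_support_eq' _ Sb ((fun e => (Sum.inl e, i)) '' {e | s e = w}),
    finsum_mem_image]
  · refine finsum_mem_congr rfl fun e he => ?_
    simp [vEntry, show s e = w from he]
  · exact fun e _ e' _ h => Sum.inl_injective (congrArg Prod.fst h)
  · rintro ⟨b | b, j⟩ hb
    · obtain ⟨rfl, rfl⟩ : s b = w ∧ i = j := by
        by_contra hbj
        simp [vEntry, hbj] at hb
      simp [hedge b rfl]
    · simp [vEntry] at hb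

end Entries

section Matrices

variable {V E A : Type*} (r s : E → V) (p : V → A) (S : E → A)

noncomputable def vMatrix [Zero A] [Star A] (Sa Sb : Set ((E ⊕ V) × ℤ)) : Matrix Sa Sb A :=
  Matrix.of fun a b => vEntry s S a.1 b.1

open Classical in
noncomputable def projDiagonal [Zero A] (Sa : Set ((E ⊕ V) × ℤ)) : Matrix Sa Sa A :=
  Matrix.diagonal fun a => p (rext r a.1.1)

theorem conjTranspose_vMatrix [AddMonoid A] [StarAddMonoid A] (Sa Sb : Set ((E ⊕ V) × ℤ)) :
    (vMatrix s S Sa Sb)ᴴ = vMatrix s S Sb Sa := by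
  ext a b
  simp [vMatrix, star_vEntry]

theorem projDiagonal_mul_vMatrix [NonUnitalNonAssocSemiring A] [Star A]
    (hsrc : ∀ e, p (s e) * S e = S e) (hrng : ∀ e, p (r e) * star (S e) = star (S e))
    (Sa Sb : Set ((E ⊕ V) × ℤ)) [Fintype Sa] :
    projDiagonal r p Sa * vMatrix s S Sa Sb = vMatrix s S Sa Sb := by
  ext a b
  simp [projDiagonal, vMatrix, proj_mul_vEntry r s p S hsrc hrng]

theorem vMatrix_mul_projDiagonal [NonUnitalSemiring A] [StarRing A]
    (hp : ∀ v, star (p v) = p v)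
    (hsrc : ∀ e, p (s e) * S e = S e) (hrng : ∀ e, p (r e) * star (S e) = star (S e))
    (Sa Sb : Set ((E ⊕ V) × ℤ)) [Fintype Sb] :
    vMatrix s S Sa Sb * projDiagonal r p Sb = vMatrix s S Sa Sb := by
  ext a b
  simp [projDiagonal, vMatrix, vEntry_mul_proj r s p S hp hsrc hrng]

theorem vMatrix_mul_vMatrix [NonUnitalNonAssocSemiring A] [StarRing A]
    (hCK1 : ∀ e, star (S e) * S e = p (r e))
    (hS_orth : ∀ e f, e ≠ f → star (S e) * S f = 0)
    (Sa Sb : Set ((E ⊕ V) × ℤ)) [Fintype Sb]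
    (hedge : ∀ e i, (Sum.inr (s e), i) ∈ Sa → (Sum.inl e, i) ∈ Sb)
    (hvert : ∀ e i, (Sum.inl e, i) ∈ Sa → (Sum.inr (s e), i) ∈ Sb)
    (hRCK : ∀ w i, (Sum.inr w, i) ∈ Sa → p w = ∑ᶠ e ∈ {e | s e = w}, S e * star (S e)) :
    vMatrix s S Sa Sb * vMatrix s S Sb Sa = projDiagonal r p Sa := by
  ext ⟨⟨e | w, i⟩, ha⟩ ⟨⟨e' | w', i'⟩, ha'⟩ <;>
    simp only [vMatrix, projDiagonal, Matrix.mul_apply, Matrix.of_apply, Matrix.diagonal_apply,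
      Subtype.ext_iff, Prod.mk.injEq, reduceCtorEq, false_and, if_false, rext, Sum.elim_inl,
      Sum.elim_inr, id]
  · rw [Finset.sum_eq_single ⟨(Sum.inr (s e), i), hvert e i ha⟩]
    · by_cases hee' : e = e'
      · subst hee'
        by_cases hii' : i = i' <;> simp [vEntry, hii', hCK1]
      · simp [vEntry, hee', hS_orth e e' hee']
    · rintro ⟨⟨b | b, j⟩, hb⟩ _ hne
      · simp [vEntry]
      · simp only [ne_eq, Subtype.mk.injEq, Prod.mk.injEq, Sum.inr.injEq] at hne
        simp only [vEntry, mul_ite, ite_mul, zero_mul, mul_zero, ite_eq_right_iff, and_imp]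
        grind
    · simp
  · exact Finset.sum_eq_zero fun b _ => by obtain ⟨⟨b | b, j⟩, hb⟩ := b <;> simp [vEntry]
  · exact Finset.sum_eq_zero fun b _ => by obtain ⟨⟨b | b, j⟩, hb⟩ := b <;> simp [vEntry]
  · by_cases hwi : w = w' ∧ i = i'
    · obtain ⟨rfl, rfl⟩ := hwi
      simp only [if_true]
      rw [sum_vEntry_mul_vEntry_inr s S Sb w i fun e he => hedge e i (he ▸ ha), hRCK w i ha]
    · rw [if_neg (by simpa using hwi)]
      refine Finset.sum_eq_zero fun b _ => ?_
      obtain ⟨⟨b | b, j⟩, hb⟩ := b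
      · simp only [vEntry, mul_ite, ite_mul, zero_mul, mul_zero, ite_eq_right_iff, and_imp]
        grind
      · simp only [vEntry, mul_zero]

end Matrices

section Reindexing

variable {V E A : Type*} {h : ℕ} (r s : E → V) (x : V → ℤ) (p : V → A) (S : E → A)

theorem Vmat_eq_submatrix [AddCommMonoid A] [Star A] [Fintype (SUp s x)] [Fintype (SDn s x)]
    (mup : SUp s x ≃ Fin h) (mdn : SDn s x ≃ Fin h) :
    Vmat s x S mup mdn = (vMatrix s S (SUp s x) (SDn s x)).submatrix mup.symm mdn.symm := by
  ext i j
  simpa [vMatrix] using Vmat_apply s S x mup mdn (mup.symm i) (mdn.symm j)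

theorem Pmat_eq_submatrix [AddCommMonoid A] [Fintype (SUp s x)] (mup : SUp s x ≃ Fin h) :
    Pmat r s x p mup = (projDiagonal r p (SUp s x)).submatrix mup.symm mup.symm := by
  ext i j
  rw [Pmat, Matrix.sum_apply, Finset.sum_eq_single (mup.symm i)]
  · simp [projDiagonal, Matrix.diagonal_apply, Matrix.single_apply]
  · intro q _ hq
    simp only [Matrix.single_apply, ite_eq_right_iff, and_imp]
    exact fun hi _ => absurd (mup.eq_symm_apply.mpr hi) hq
  · simp

theorem Pmat_eq_submatrix_of_compat [AddCommMonoid A] [Fintype (SUp s x)] [Fintype (SDn s x)]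
    (mup : SUp s x ≃ Fin h) (mdn : SDn s x ≃ Fin h)
    (hcomp : ∀ (q : SUp s x) (q' : SDn s x), mup q = mdn q' → rext r q.1.1 = rext r q'.1.1) :
    Pmat r s x p mup = (projDiagonal r p (SDn s x)).submatrix mdn.symm mdn.symm := by
  rw [Pmat_eq_submatrix]
  ext i j
  simp only [projDiagonal, Matrix.submatrix_apply, Matrix.diagonal_apply, Equiv.symm_apply_eq,
    Equiv.apply_symm_apply]
  split_ifs
  · exact congrArg p (hcomp _ _ (by simp))
  · rfl

end Reindexing

theorem stmt13_general {V E A : Type*} [CStarAlgebra A]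
    (r s : E → V) (p : V → A) (S : E → A)
    (hp_star : ∀ v, star (p v) = p v)
    (hp_idem : ∀ v, p v * p v = p v)
    (hCK1 : ∀ e, star (S e) * S e = p (r e))
    (hS_orth : ∀ e f, e ≠ f → star (S e) * S f = 0)
    (hCK3 : ∀ e, p (s e) * S e = S e)
    (x : V → ℤ)
    {h : ℕ} [Fintype (SUp s x)] [Fintype (SDn s x)]
    (mup : SUp s x ≃ Fin h) (mdn : SDn s x ≃ Fin h)
    (hcomp : ∀ (q : SUp s x) (q' : SDn s x), mup q = mdn q' → rext r q.1.1 = rext r q'.1.1)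
    (hRCK : ∀ w, x w ≠ 0 → p w = ∑ᶠ e ∈ {e | s e = w}, S e * star (S e)) :
    (Vmat s x S mup mdn + (1 - Pmat r s x p mup)) *
        star (Vmat s x S mup mdn + (1 - Pmat r s x p mup)) = 1 ∧
      star (Vmat s x S mup mdn + (1 - Pmat r s x p mup)) *
        (Vmat s x S mup mdn + (1 - Pmat r s x p mup)) = 1 := by
  have hrng : ∀ e, p (r e) * star (S e) = star (S e) := fun e => by
    have hSp := CStarRing.mul_star_mul_self_of_isIdempotentElem (a := S e)
      (by rw [hCK1]; exact hp_idem (r e))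
    simpa [hCK1, hp_star] using congrArg star hSp
  have hRCKup : ∀ w i, (Sum.inr w, i) ∈ SUp s x → p w = ∑ᶠ e ∈ {e | s e = w}, S e * star (S e) :=
    fun w i (hi : 1 ≤ i ∧ i ≤ x w) => hRCK w (by omega)
  have hRCKdn : ∀ w i, (Sum.inr w, i) ∈ SDn s x → p w = ∑ᶠ e ∈ {e | s e = w}, S e * star (S e) :=
    fun w i (hi : 1 ≤ i ∧ i ≤ -x w) => hRCK w (by omega)
  have hPdn := Pmat_eq_submatrix_of_compat r s x p mup mdn hcomp
  rw [Pmat_eq_submatrix] at hPdn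
  rw [Vmat_eq_submatrix, Pmat_eq_submatrix]
  refine (Unitary.mem_iff.mp (add_one_sub_mem_unitary ?_ ?_ ?_ ?_)).symm
  · rw [Matrix.star_eq_conjTranspose, Matrix.conjTranspose_submatrix, Matrix.submatrix_mul_equiv,
      conjTranspose_vMatrix, vMatrix_mul_vMatrix r s p S hCK1 hS_orth _ _ (fun _ _ => id)
        (fun _ _ => id) hRCKup]
  · rw [Matrix.star_eq_conjTranspose, Matrix.conjTranspose_submatrix, Matrix.submatrix_mul_equiv,
      conjTranspose_vMatrix, vMatrix_mul_vMatrix r s p S hCK1 hS_orth _ _ (fun _ _ => id)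
        (fun _ _ => id) hRCKdn, hPdn]
  · rw [Matrix.submatrix_mul_equiv, projDiagonal_mul_vMatrix r s p S hCK3 hrng]
  · rw [hPdn, Matrix.submatrix_mul_equiv, vMatrix_mul_projDiagonal r s p S hp_star hCK3 hrng]

theorem stmt13 {V E A : Type*} [Countable V] [Countable E] [CStarAlgebra A]
    (r s : E → V) (p : V → A) (S : E → A)
    (hp_star : ∀ v, star (p v) = p v)
    (hp_idem : ∀ v, p v * p v = p v)
    (hp_orth : ∀ v w, v ≠ w → p v * p w = 0)
    (hCK1 : ∀ e, star (S e) * S e = p (r e))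
    (hS_orth : ∀ e f, e ≠ f → star (S e) * S f = 0)
    (hCK3 : ∀ e, p (s e) * S e = S e)
    (x : V → ℤ) (hsupp : {v | x v ≠ 0}.Finite)
    (hemit : ∀ v, x v ≠ 0 → {e | s e = v}.Finite)
    (hker : ∀ v, ∑ᶠ e ∈ {e | r e = v}, x (s e) = x v)
    {h : ℕ} [Fintype (SUp s x)] [Fintype (SDn s x)]
    (mup : SUp s x ≃ Fin h) (mdn : SDn s x ≃ Fin h)
    (hcomp : ∀ (q : SUp s x) (q' : SDn s x), mup q = mdn q' → rext r q.1.1 = rext r q'.1.1)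
    (hRCK : ∀ w, x w ≠ 0 → p w = ∑ᶠ e ∈ {e | s e = w}, S e * star (S e)) :
    (Vmat s x S mup mdn + (1 - Pmat r s x p mup)) *
        star (Vmat s x S mup mdn + (1 - Pmat r s x p mup)) = 1 ∧
      star (Vmat s x S mup mdn + (1 - Pmat r s x p mup)) *
        (Vmat s x S mup mdn + (1 - Pmat r s x p mup)) = 1 :=
  stmt13_general r s p S hp_star hp_idem hCK1 hS_orth hCK3 x mup mdn hcomp hRCK
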